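/- Let G be a group with Nat.card G = 16 and s, t : G with orderOf s = 8, orderOf t = 2, t * s * t = s^3, and G generated by {s, t} (Subgroup.closure {s, t} = ⊤). Then G has exactly 7 conjugacy classes: Nat.card (ConjClasses G) = 7. -/
import Mathlib
set_option maxHeartbeats 4000000

structure SD16 where
  i : ZMod 8
  e : ZMod 2
deriving DecidableEq, Fintype

namespace SD16

instance : Mul SD16 := ⟨fun x y => ⟨x.i + (if x.e = 0 then y.i else 3 * y.i), x.e + y.e⟩⟩
instance : One SD16 := ⟨⟨0, 0⟩⟩
instance : Inv SD16 := ⟨fun x => ⟨-(if x.e = 0 then x.i else 3 * x.i), x.e⟩⟩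

instance : Group SD16 where
  mul_assoc := by decide
  one_mul := by decide
  mul_one := by decide
  inv_mul_cancel := by decide

instance : DecidableRel (IsConj : SD16 → SD16 → Prop) :=
  fun a b => decidable_of_iff (∃ c : SD16, c * a * c⁻¹ = b) isConj_iff.symm

lemma card_eq : Nat.card SD16 = 16 := by
  rw [Nat.card_eq_fintype_card]; decide

lemma card_conjClasses : Nat.card (ConjClasses SD16) = 7 := by
  rw [Nat.card_eq_fintype_card]; decide

lemma mul_def (x y : SD16) :
    x * y = ⟨x.i + (if x.e = 0 then y.i else 3 * y.i), x.e + y.e⟩ := rfl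

end SD16

/-- A semidihedral group of order 16 has exactly 7 conjugacy classes. -/
theorem semidihedral16_conjClasses_card {G : Type*} [Group G]
    (hG : Nat.card G = 16) (s t : G)
    (hs : orderOf s = 8) (ht : orderOf t = 2) (hst : t * s * t = s ^ 3)
    (hgen : Subgroup.closure ({s, t} : Set G) = ⊤) :
    Nat.card (ConjClasses G) = 7 := by
  have hfin : Finite G := Nat.finite_of_card_ne_zero (by omega)
  have ht2 : t * t = 1 := by
    have := pow_orderOf_eq_one t; rwa [ht, sq] at this
  have htinv : t⁻¹ = t := by rw [inv_eq_iff_mul_eq_one]; exact ht2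
  have hts : ∀ n : ℕ, t * s ^ n * t = s ^ (3 * n) := by
    intro n
    calc t * s ^ n * t = (t * s * t⁻¹) ^ n := by rw [conj_pow, htinv]
      _ = (s ^ 3) ^ n := by rw [htinv, hst]
      _ = s ^ (3 * n) := by rw [← pow_mul]
  have spow : ∀ n : ℕ, s ^ ((n : ZMod 8)).val = s ^ n := by
    intro n
    rw [ZMod.val_natCast, show (8 : ℕ) = orderOf s from hs.symm, pow_mod_orderOf]
  have tpow : ∀ n : ℕ, t ^ ((n : ZMod 2)).val = t ^ n := by
    intro n
    rw [ZMod.val_natCast, show (2 : ℕ) = orderOf t from ht.symm, pow_mod_orderOf]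
  have key8 : ∀ (a : ZMod 8) (n : ℕ), ((n : ZMod 8) = a) → s ^ a.val = s ^ n := by
    intro a n h; rw [← h, spow]
  have key2 : ∀ (a : ZMod 2) (n : ℕ), ((n : ZMod 2) = a) → t ^ a.val = t ^ n := by
    intro a n h; rw [← h, tpow]
  have e2 : ∀ x : ZMod 2, x = 0 ∨ x = 1 := by decide
  let φ : SD16 →* G :=
    { toFun := fun x => s ^ x.i.val * t ^ x.e.val
      map_one' := by
        show s ^ (0 : ZMod 8).val * t ^ (0 : ZMod 2).val = 1
        simp
      map_mul' := by
        rintro ⟨i, e⟩ ⟨j, f⟩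
        rw [SD16.mul_def]
        show s ^ ((i + if e = 0 then j else 3 * j : ZMod 8)).val * t ^ ((e + f : ZMod 2)).val
          = (s ^ i.val * t ^ e.val) * (s ^ j.val * t ^ f.val)
        rcases e2 e with he | he <;> subst he
        · simp only [if_true, reduceIte]
          rw [key8 (i + j) (i.val + j.val) (by push_cast [ZMod.natCast_val, ZMod.cast_id]; ring),
            key2 (0 + f) f.val (by push_cast [ZMod.natCast_val, ZMod.cast_id]; ring)]
          simp [pow_add, mul_assoc]
        · simp only [one_ne_zero, if_neg, if_false, reduceIte]
          rw [key8 (i + 3 * j) (i.val + 3 * j.val)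
              (by push_cast [ZMod.natCast_val, ZMod.cast_id]; ring),
            key2 (1 + f) (1 + f.val) (by push_cast [ZMod.natCast_val, ZMod.cast_id]; ring)]
          have hcomm : t * s ^ j.val = s ^ (3 * j.val) * t := by
            rw [← hts j.val, mul_assoc, mul_assoc, ht2, mul_one]
          simp only [ZMod.val_one, pow_one, pow_add, mul_assoc]
          rw [← mul_assoc t, hcomm, mul_assoc] }
  have hsurj : Function.Surjective φ := by
    rw [← MonoidHom.range_eq_top, eq_top_iff, ← hgen, Subgroup.closure_le]
    rintro x (rfl | rfl)
    · exact ⟨⟨1, 0⟩, by simp [φ, show (1 : ZMod 8).val = 1 from rfl]⟩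
    · exact ⟨⟨0, 1⟩, by simp [φ, show (1 : ZMod 2).val = 1 from rfl]⟩
  have hbij : Function.Bijective φ := by
    letI := Fintype.ofFinite G
    refine (Fintype.bijective_iff_surjective_and_card φ).2 ⟨hsurj, ?_⟩
    have h1 : Fintype.card SD16 = 16 := by decide
    have h2 : Fintype.card G = 16 := by rw [← Nat.card_eq_fintype_card, hG]
    rw [h1, h2]
  let eqv : SD16 ≃* G := MulEquiv.ofBijective φ hbij
  have hiso : ∀ a b : SD16, IsConj a b ↔ IsConj (eqv a) (eqv b) := by
    intro a b
    constructor
    · exact fun h => eqv.toMonoidHom.map_isConj h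
    · intro h
      have := eqv.symm.toMonoidHom.map_isConj h
      simpa using this
  have : ConjClasses SD16 ≃ ConjClasses G := Quotient.congr eqv.toEquiv hiso
  rw [← Nat.card_congr this, SD16.card_conjClasses]
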